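/- Let A be an additive commutative group, T : ℤ → A an arbitrary function, n ∈ ℤ, and λ a partition with Frobenius coordinates (α_1,…,α_{d(λ)} | β_1,…,β_{d(λ)}), where d(λ) is the number of diagonal cells of λ, α_i = λ_i − i, and β_i = λ'_i − i with λ' the transposed partition. Then ∑_{(i,j)∈λ} ( T(n+j−i) − T(n+j−i−1) ) = ∑_{i=1}^{d(λ)} ( T(n+α_i) − T(n−β_i−1) ), where the left-hand sum runs over all cells (i,j) of the Young diagram of λ. -/
import Mathlib

private lemma hook_fiber_eq (lam : YoungDiagram) (i : ℕ) (hi : (i, i) ∈ lam) :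
    lam.cells.filter (fun c => min c.1 c.2 = i) =
      (Finset.Ico i (lam.rowLen i)).image (fun j => (i, j)) ∪
      (Finset.Ico (i + 1) (lam.colLen i)).image (fun k => (k, i)) := by
  ext ⟨a, b⟩
  simp only [Finset.mem_filter, YoungDiagram.mem_cells, Finset.mem_union, Finset.mem_image,
    Finset.mem_Ico, Prod.mk.injEq]
  constructor
  · rintro ⟨hab, hmin⟩
    rcases le_or_gt a b with h | h
    · left
      refine ⟨b, ⟨?_, ?_⟩, ?_, rfl⟩
      · omega
      · rw [YoungDiagram.mem_iff_lt_rowLen] at hab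
        have : a = i := by omega
        rwa [this] at hab
      · omega
    · right
      refine ⟨a, ⟨by omega, ?_⟩, rfl, ?_⟩
      · rw [YoungDiagram.mem_iff_lt_colLen] at hab
        have : b = i := by omega
        rwa [this] at hab
      · omega
  · rintro (⟨j, ⟨hj1, hj2⟩, rfl, rfl⟩ | ⟨k, ⟨hk1, hk2⟩, rfl, rfl⟩)
    · exact ⟨YoungDiagram.mem_iff_lt_rowLen.2 hj2, by omega⟩
    · exact ⟨YoungDiagram.mem_iff_lt_colLen.2 hk2, by omega⟩

private lemma arm_sum {A : Type*} [AddCommGroup A] (T : ℤ → A) (n : ℤ) {i r : ℕ} (h : i < r) :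
    ∑ j ∈ Finset.Ico i r, (T (n + (j : ℤ) - i) - T (n + (j : ℤ) - i - 1)) =
      T (n + (r : ℤ) - i - 1) - T (n - 1) := by
  rw [Finset.sum_Ico_eq_sum_range]
  rw [Finset.sum_congr rfl (fun j _ => show _ = (fun j : ℕ => T (n + j - 1)) (j + 1) -
        (fun j : ℕ => T (n + j - 1)) j by simp only []; congr 2 <;> push_cast <;> ring),
    Finset.sum_range_sub (fun j : ℕ => T (n + (j : ℤ) - 1))]
  congr 2 <;> push_cast [Nat.cast_sub h.le] <;> ring

private lemma leg_sum {A : Type*} [AddCommGroup A] (T : ℤ → A) (n : ℤ) {i c : ℕ} (h : i < c) :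
    ∑ k ∈ Finset.Ico (i + 1) c, (T (n + (i : ℤ) - k) - T (n + (i : ℤ) - k - 1)) =
      T (n - 1) - T (n - (c : ℤ) + i) := by
  rw [Finset.sum_Ico_eq_sum_range]
  rw [Finset.sum_congr rfl (fun k _ => show _ = (fun k : ℕ => T (n - 1 - k)) k -
        (fun k : ℕ => T (n - 1 - k)) (k + 1) by simp only []; congr 2 <;> push_cast <;> ring),
    Finset.sum_range_sub' (fun k : ℕ => T (n - 1 - (k : ℤ)))]
  congr 2
  · push_cast; ring
  · push_cast [Nat.cast_sub h]
    ring

/-!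
STATEMENT 0.  For an additive commutative group `A`, a function `T : ℤ → A`, an integer `n`
and a partition (Young diagram) `λ`, we have
`∑_{(i,j) ∈ λ} (T(n+j−i) − T(n+j−i−1)) = ∑_{i=1}^{d(λ)} (T(n+α_i) − T(n−β_i−1))`,
where `(α|β)` are the Frobenius coordinates of `λ`: with 1-indexed `i`, `α_i = λ_i − i` and
`β_i = λ'_i − i`.  Cells of a `YoungDiagram` are 0-indexed, so the cell `c = (i,j)`
(0-indexed) has content `j − i`, and for a 0-indexed diagonal index `i`
(the diagonal cells are exactly the `(i,i) ∈ λ`, with `i < ℓ(λ) = colLen 0`)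
one has `n + α = n + rowLen i − i − 1` and `n − β − 1 = n − colLen i + i`. -/
theorem nested_hypergeometric_content_sum_frobenius
    {A : Type*} [AddCommGroup A] (T : ℤ → A) (n : ℤ) (lam : YoungDiagram) :
    ∑ c ∈ lam.cells,
        (T (n + (c.2 : ℤ) - (c.1 : ℤ)) - T (n + (c.2 : ℤ) - (c.1 : ℤ) - 1)) =
    ∑ i ∈ (Finset.range (lam.colLen 0)).filter (fun i => (i, i) ∈ lam),
        (T (n + (lam.rowLen i : ℤ) - (i : ℤ) - 1) - T (n - (lam.colLen i : ℤ) + (i : ℤ))) := by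
  classical
  rw [← Finset.sum_fiberwise_of_maps_to (g := fun c : ℕ × ℕ => min c.1 c.2)
    (t := (Finset.range (lam.colLen 0)).filter (fun i => (i, i) ∈ lam)) ?_]
  · refine Finset.sum_congr rfl fun i hi => ?_
    simp only [Finset.mem_filter, Finset.mem_range] at hi
    rw [hook_fiber_eq lam i hi.2, Finset.sum_union, Finset.sum_image, Finset.sum_image]
    · have hr : i < lam.rowLen i := YoungDiagram.mem_iff_lt_rowLen.1 hi.2
      have hc : i < lam.colLen i := YoungDiagram.mem_iff_lt_colLen.1 hi.2
      rw [arm_sum T n hr, leg_sum T n hc]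
      abel
    · intro x _ y _ h; simpa using h
    · intro x _ y _ h; simpa using h
    · simp only [Finset.disjoint_left, Finset.mem_image, Finset.mem_Ico]
      rintro ⟨a, b⟩ ⟨j, hj, h1⟩ ⟨k, hk, h2⟩
      simp only [Prod.mk.injEq] at h1 h2
      omega
  · intro c hc
    rw [YoungDiagram.mem_cells] at hc
    have hm : (min c.1 c.2, min c.1 c.2) ∈ lam :=
      lam.up_left_mem (min_le_left _ _) (min_le_right _ _) (by simpa using hc)
    simp only [Finset.mem_filter, Finset.mem_range]
    exact ⟨YoungDiagram.mem_iff_lt_colLen.1 (lam.up_left_mem le_rfl (Nat.zero_le _) hm), hm⟩
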